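/- Let C be a special cycle in a graph G with maximum degree 3, and let v be a vertex not in C adjacent to some vertex x of C. Suppose v has a neighbor a that is not in C and not adjacent to any vertex of C, with a != v. Then it cannot happen that v is adjacent to no other vertex of C; that is, if v has exactly one neighbor x in C and a neighbor a outside C nonadjacent to C, we get a contradiction with C being special: (C \ {x'}) ∪ {v, a} induces a path with |C|+1 vertices for a neighbor x' of x on C. -/

import Mathlib

namespace CubicBox

/-- `u` and `v` are consecutive elements of the list `l`. -/
def Consec {V : Type*} (l : List V) (u v : V) : Prop :=
  (u, v) ∈ l.zip l.tail ∨ (v, u) ∈ l.zip l.tail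

/-- `u` and `v` are cyclically consecutive elements of the list `l`. -/
def CConsec {V : Type*} (l : List V) (u v : V) : Prop :=
  (u, v) ∈ l.zip (l.rotate 1) ∨ (v, u) ∈ l.zip (l.rotate 1)

/-- The list `l` enumerates (in order) the vertices of an induced path of `G`:
two listed vertices are adjacent iff they are consecutive in the list. -/
def IsInducedPathList {V : Type*} (G : SimpleGraph V) (l : List V) : Prop :=
  l ≠ [] ∧ l.Nodup ∧ ∀ u ∈ l, ∀ v ∈ l, (G.Adj u v ↔ Consec l u v)

/-- The list `l` enumerates (in cyclic order) the vertices of an induced cycle of `G`. -/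
def IsInducedCycleList {V : Type*} (G : SimpleGraph V) (l : List V) : Prop :=
  3 ≤ l.length ∧ l.Nodup ∧ ∀ u ∈ l, ∀ v ∈ l, (G.Adj u v ↔ CConsec l u v)

/-- The vertex set `P` induces a path in `G`. -/
def IsInducedPath {V : Type*} [DecidableEq V] (G : SimpleGraph V) (P : Finset V) : Prop :=
  ∃ l : List V, IsInducedPathList G l ∧ l.toFinset = P

/-- The vertex set `C` induces a cycle in `G`. -/
def IsInducedCycle {V : Type*} [DecidableEq V] (G : SimpleGraph V) (C : Finset V) : Prop :=
  ∃ l : List V, IsInducedCycleList G l ∧ l.toFinset = C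

/-- `x` is an endpoint of the induced path on vertex set `P`. -/
def IsEndpoint {V : Type*} [DecidableEq V] (G : SimpleGraph V) (P : Finset V) (x : V) : Prop :=
  ∃ l : List V, IsInducedPathList G l ∧ l.toFinset = P ∧
    (l.head? = some x ∨ l.getLast? = some x)

/-- A special cycle: an induced cycle `C` such that for every `x ∈ C`, `C \ {x}` is not
contained in an induced cycle or induced path with at least `|C| + 1` vertices. -/
def SpecialCycle {V : Type*} [DecidableEq V] (G : SimpleGraph V) (C : Finset V) : Prop :=
  IsInducedCycle G C ∧
  ∀ x ∈ C, ¬ ∃ D : Finset V, (IsInducedCycle G D ∨ IsInducedPath G D) ∧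
    C.card + 1 ≤ D.card ∧ C.erase x ⊆ D

/-- A special path: a maximal induced path `P` (not contained in an induced cycle nor in a
longer induced path) such that for each endpoint `x`, `P \ {x}` is not contained in an induced
cycle with at least `|P|` vertices nor in an induced path with at least `|P| + 1` vertices. -/
def SpecialPath {V : Type*} [DecidableEq V] (G : SimpleGraph V) (P : Finset V) : Prop :=
  IsInducedPath G P ∧
  (¬ ∃ D : Finset V, (IsInducedCycle G D ∧ P ⊆ D) ∨
      (IsInducedPath G D ∧ P ⊆ D ∧ P.card < D.card)) ∧
  ∀ x, IsEndpoint G P x → ¬ ∃ D : Finset V,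
      (IsInducedCycle G D ∧ P.card ≤ D.card ∧ P.erase x ⊆ D) ∨
      (IsInducedPath G D ∧ P.card + 1 ≤ D.card ∧ P.erase x ⊆ D)

/-- A special cycle of the subgraph of `G` induced on the vertex set `W`. -/
def SpecialCycleIn {V : Type*} [DecidableEq V] (G : SimpleGraph V) (W C : Finset V) : Prop :=
  C ⊆ W ∧ IsInducedCycle G C ∧
  ∀ x ∈ C, ¬ ∃ D : Finset V, D ⊆ W ∧ (IsInducedCycle G D ∨ IsInducedPath G D) ∧
    C.card + 1 ≤ D.card ∧ C.erase x ⊆ D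

/-- A special path of the subgraph of `G` induced on the vertex set `W`. -/
def SpecialPathIn {V : Type*} [DecidableEq V] (G : SimpleGraph V) (W P : Finset V) : Prop :=
  P ⊆ W ∧ IsInducedPath G P ∧
  (¬ ∃ D : Finset V, D ⊆ W ∧ ((IsInducedCycle G D ∧ P ⊆ D) ∨
      (IsInducedPath G D ∧ P ⊆ D ∧ P.card < D.card))) ∧
  ∀ x, IsEndpoint G P x → ¬ ∃ D : Finset V, D ⊆ W ∧
      ((IsInducedCycle G D ∧ P.card ≤ D.card ∧ P.erase x ⊆ D) ∨
       (IsInducedPath G D ∧ P.card + 1 ≤ D.card ∧ P.erase x ⊆ D))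

/-- `ProcessFrom G W Ts A₁`: starting from remaining vertex set `W`, the extraction process of
Algorithm 1 extracts, in order, the special cycles/paths listed in `Ts` (removing each together
with its neighborhood in the current remaining graph), terminating with remaining set `A₁`,
at which point no connected component of the remaining induced subgraph has `≥ 3` vertices. -/
def ProcessFrom {V : Type*} [DecidableEq V] (G : SimpleGraph V) [DecidableRel G.Adj] :
    Finset V → List (Finset V) → Finset V → Prop
  | W, [], A => A = W ∧
      ¬ ∃ x ∈ W, ∃ y ∈ W, ∃ z ∈ W, x ≠ z ∧ G.Adj y x ∧ G.Adj y z
  | W, T :: rest, A =>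
      (SpecialCycleIn G W T ∨ SpecialPathIn G W T) ∧
      ProcessFrom G (W \ (T ∪ W.filter (fun w => ∃ t ∈ T, G.Adj w t))) rest A

/-- The primary partition `V = S ⊎ N₁ ⊎ A₁` obtained by Algorithm 1, with extracted
special cycles/paths listed in `Ts`: `S` is their union, `N₁ = N(S,G)`, and `A₁` is the
final remaining set. -/
def PrimaryPartitionWith {V : Type*} [Fintype V] [DecidableEq V] (G : SimpleGraph V)
    [DecidableRel G.Adj] (Ts : List (Finset V)) (S N₁ A₁ : Finset V) : Prop :=
  ProcessFrom G Finset.univ Ts A₁ ∧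
  S = Ts.foldr (· ∪ ·) ∅ ∧
  N₁ = Finset.univ.filter (fun v => v ∉ S ∧ ∃ s ∈ S, G.Adj v s)

/-- The primary partition `V = S ⊎ N₁ ⊎ A₁` obtained by Algorithm 1. -/
def PrimaryPartition {V : Type*} [Fintype V] [DecidableEq V] (G : SimpleGraph V)
    [DecidableRel G.Adj] (S N₁ A₁ : Finset V) : Prop :=
  ∃ Ts : List (Finset V), PrimaryPartitionWith G Ts S N₁ A₁

/-- One pass of Algorithm 2 (the refinement producing `R` and `B`): starting from the state
`s = (R, B)`, processing the vertices in the given list one at a time (moving `v` to `R`, and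
`X1 v` together with `X2 v` to `B`, whenever `v` has two neighbors in `A₁ \ B`) ends
in the state `t`. -/
def RunsTo {V : Type*} [DecidableEq V] (G : SimpleGraph V) [DecidableRel G.Adj]
    (A₁ : Finset V) (X1 X2 : V → Finset V) :
    Finset V × Finset V → List V → Finset V × Finset V → Prop
  | s, [], t => t = s
  | s, v :: l, t =>
      let X1v := (A₁ \ s.2).filter (fun a => G.Adj v a)
      let X2v := ((A₁ \ s.2).filter (fun a => ∃ x ∈ X1v, G.Adj a x)) \ X1v
      if X1v.card = 2 then
        X1 v = X1v ∧ X2 v = X2v ∧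
        RunsTo G A₁ X1 X2 (insert v s.1, s.2 ∪ X1v ∪ X2v) l t
      else
        RunsTo G A₁ X1 X2 s l t

/-- The refinement of Algorithm 2: iterating over the vertices of `N₁` (in some order) yields
the sets `R` and `B` (with recorded neighborhoods `X1 u`, `X2 u` for `u ∈ R`), and
`N = N₁ \ R`, `A = A₁ \ B`. -/
def Refinement {V : Type*} [DecidableEq V] (G : SimpleGraph V) [DecidableRel G.Adj]
    (N₁ A₁ : Finset V) (X1 X2 : V → Finset V) (R B N A : Finset V) : Prop :=
  ∃ vs : List V, vs.Nodup ∧ vs.toFinset = N₁ ∧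
    RunsTo G A₁ X1 X2 (∅, ∅) vs (R, B) ∧ N = N₁ \ R ∧ A = A₁ \ B

/-- The axis-parallel box in `ℝ^k` that is the product of the closed intervals
`[lo i, hi i]`. -/
def box {k : ℕ} (lo hi : Fin k → ℝ) : Set (Fin k → ℝ) :=
  Set.univ.pi fun i => Set.Icc (lo i) (hi i)

/-- `G` has a `k`-box representation: it is the intersection graph of a family of
(nonempty) axis-parallel boxes in `ℝ^k` indexed by its vertices. -/
def HasBoxRep {W : Type*} (G : SimpleGraph W) (k : ℕ) : Prop :=
  ∃ lo hi : W → Fin k → ℝ, (∀ v i, lo v i ≤ hi v i) ∧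
    ∀ u v : W, G.Adj u v ↔ u ≠ v ∧ (box (lo u) (hi u) ∩ box (lo v) (hi v)).Nonempty

/-- `G` is an interval graph: the intersection graph of a family of closed intervals
on the real line indexed by its vertices. -/
def IsIntervalGraph {W : Type*} (G : SimpleGraph W) : Prop :=
  ∃ lo hi : W → ℝ, (∀ v, lo v ≤ hi v) ∧
    ∀ u v : W, G.Adj u v ↔ u ≠ v ∧
      (Set.Icc (lo u) (hi u) ∩ Set.Icc (lo v) (hi v)).Nonempty

end CubicBox

open CubicBox

section Helpers
variable {V : Type*}

lemma consec_cons_cons (x y : V) (ys : List V) (u v : V) :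
    Consec (x :: y :: ys) u v ↔ (u = x ∧ v = y) ∨ (u = y ∧ v = x) ∨ Consec (y :: ys) u v := by
  simp [Consec, Prod.ext_iff]
  tauto

lemma consec_mem {l : List V} {u v : V} (h : Consec l u v) : u ∈ l ∧ v ∈ l := by
  rcases h with h | h
  · have := List.of_mem_zip h
    exact ⟨this.1, List.mem_of_mem_tail this.2⟩
  · have := List.of_mem_zip h
    exact ⟨List.mem_of_mem_tail this.2, this.1⟩

lemma consec_append_singleton (u v z w : V) (l : List V) (hw : l.getLast? = some w) :
    Consec (l ++ [z]) u v ↔ Consec l u v ∨ (u = w ∧ v = z) ∨ (u = z ∧ v = w) := by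
  induction l with
  | nil => simp at hw
  | cons x xs ih =>
    cases xs with
    | nil =>
      simp only [List.getLast?_singleton, Option.some.injEq] at hw
      subst hw
      simp [Consec, Prod.ext_iff]
      tauto
    | cons y ys =>
      rw [List.getLast?_cons_cons] at hw
      rw [show (x :: y :: ys) ++ [z] = x :: ((y :: ys) ++ [z]) from rfl]
      rw [show (y :: ys) ++ [z] = y :: (ys ++ [z]) from rfl, consec_cons_cons,
        ← show (y :: ys) ++ [z] = y :: (ys ++ [z]) from rfl, ih hw, consec_cons_cons]
      tauto

lemma consec_reverse (u v : V) (l : List V) :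
    Consec l.reverse u v ↔ Consec l u v := by
  induction l with
  | nil => simp
  | cons x xs ih =>
    cases xs with
    | nil => simp [Consec]
    | cons y ys =>
      rw [List.reverse_cons, consec_append_singleton u v x y _
        (by rw [List.getLast?_reverse]; rfl), ih, consec_cons_cons]
      tauto

lemma zip_append_last (w gl : V) : ∀ (x : V) (xs : List V),
    (x :: xs).getLast? = some gl →
    (x :: xs).zip (xs ++ [w]) = (x :: xs).zip xs ++ [(gl, w)]
  | x, [], h => by
    simp only [List.getLast?_singleton, Option.some.injEq] at h
    subst h; simp
  | x, y :: ys, h => by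
    rw [List.getLast?_cons_cons] at h
    rw [show (y :: ys) ++ [w] = y :: (ys ++ [w]) from rfl, List.zip_cons_cons,
      zip_append_last w gl y ys h, List.zip_cons_cons]
    rfl

lemma cconsec_iff (u v : V) (l : List V) (x z : V)
    (hx : l.head? = some x) (hz : l.getLast? = some z) :
    CConsec l u v ↔ Consec l u v ∨ (u = z ∧ v = x) ∨ (u = x ∧ v = z) := by
  obtain ⟨xs, rfl⟩ : ∃ xs, l = x :: xs := by
    cases l with
    | nil => simp at hx
    | cons c xs =>
      simp only [List.head?_cons, Option.some.injEq] at hx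
      exact ⟨xs, by rw [hx]⟩
  have hrot : (x :: xs).rotate 1 = xs ++ [x] := by
    rw [List.rotate_cons_succ, List.rotate_zero]
  rw [CConsec, hrot, zip_append_last x z x xs hz]
  simp only [Consec, List.tail_cons, List.mem_append, List.mem_singleton, Prod.ext_iff]
  tauto

lemma cconsec_rotate_one (u v x : V) (xs : List V) :
    CConsec (xs ++ [x]) u v ↔ CConsec (x :: xs) u v := by
  cases xs with
  | nil => simp
  | cons y ys =>
    obtain ⟨w, hw⟩ : ∃ w, (y :: ys).getLast? = some w :=
      ⟨(y :: ys).getLast (by simp), List.getLast?_eq_getLast _⟩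
    rw [cconsec_iff u v ((y :: ys) ++ [x]) y x (by rw [List.cons_append]; rfl)
        (List.getLast?_concat),
      cconsec_iff u v (x :: y :: ys) x w rfl (by rw [List.getLast?_cons_cons]; exact hw),
      consec_append_singleton u v x w _ hw, consec_cons_cons]
    tauto

lemma cconsec_rotate (u v x : V) : ∀ (l₁ l₂ : List V),
    CConsec (l₁ ++ x :: l₂) u v ↔ CConsec (x :: (l₂ ++ l₁)) u v
  | [], l₂ => by simp
  | c :: l₁, l₂ => by
    rw [List.cons_append, ← cconsec_rotate_one u v c (l₁ ++ x :: l₂)]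
    rw [show (l₁ ++ x :: l₂) ++ [c] = l₁ ++ x :: (l₂ ++ [c]) from by simp]
    rw [cconsec_rotate u v x l₁ (l₂ ++ [c])]
    simp

lemma cconsec_reverse (u v : V) (l : List V) :
    CConsec l.reverse u v ↔ CConsec l u v := by
  cases l with
  | nil => simp [CConsec]
  | cons c xs =>
    obtain ⟨z, hz⟩ : ∃ z, (c :: xs).getLast? = some z :=
      ⟨(c :: xs).getLast (by simp), List.getLast?_eq_getLast _⟩
    rw [cconsec_iff u v _ z c (by rw [List.head?_reverse]; exact hz)
        (by rw [List.getLast?_reverse]; rfl),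
      cconsec_iff u v (c :: xs) c z rfl hz, consec_reverse]
    tauto

end Helpers


open CubicBox in
/-- if `C` is an induced cycle in a graph of maximum degree at most 3, `v ∉ C`
is adjacent to exactly one vertex `x` of `C`, `a ∉ C` is a neighbor of `v` not adjacent to any
vertex of `C`, and `x'` is a neighbor of `x` on `C`, then `(C \ {x'}) ∪ {v, a}` induces a path
on `|C| + 1` vertices; hence `C` is not a special cycle. -/
theorem stmt_11 {V : Type} [Fintype V] [DecidableEq V] (G : SimpleGraph V)
    [DecidableRel G.Adj] (hΔ : ∀ w, G.degree w ≤ 3)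
    (C : Finset V) (hC : IsInducedCycle G C)
    (v a x x' : V) (hvC : v ∉ C) (hxC : x ∈ C) (hvx : G.Adj v x)
    (hvonly : ∀ y ∈ C, y ≠ x → ¬ G.Adj v y)
    (haC : a ∉ C) (hav : a ≠ v) (hva : G.Adj v a)
    (hanone : ∀ y ∈ C, ¬ G.Adj a y)
    (hx'C : x' ∈ C) (hx'x : x' ≠ x) (hxx' : G.Adj x x') :
    IsInducedPath G ((C \ {x'}) ∪ {v, a}) ∧
    ((C \ {x'}) ∪ {v, a}).card = C.card + 1 ∧
    ¬ SpecialCycle G C := by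
  classical
  obtain ⟨l, ⟨hlen, hnd, hadj⟩, hlC⟩ := hC
  have hmemC : ∀ y ∈ C, y ∈ l := fun y hy => by rw [← List.mem_toFinset, hlC]; exact hy
  have hxl : x ∈ l := hmemC x hxC
  -- Find a cyclic enumeration of C starting at x and ending at x'.
  obtain ⟨m, hmnd, hmfin, hmlen, hmadj, hmhead, hmlast⟩ :
      ∃ m : List V, m.Nodup ∧ m.toFinset = C ∧ 3 ≤ m.length ∧
        (∀ u ∈ C, ∀ w ∈ C, (G.Adj u w ↔ CConsec m u w)) ∧
        m.head? = some x ∧ m.getLast? = some x' := by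
    obtain ⟨l₁, l₂, rfl⟩ := List.append_of_mem hxl
    have hperm : (l₁ ++ x :: l₂).Perm (x :: (l₂ ++ l₁)) :=
      List.perm_append_comm
    have hnd0 : (x :: (l₂ ++ l₁)).Nodup := hperm.nodup_iff.mp hnd
    have hfin0 : (x :: (l₂ ++ l₁)).toFinset = C := by
      rw [← hlC]; exact (List.toFinset_eq_of_perm _ _ hperm).symm
    have hlen0 : 3 ≤ (x :: (l₂ ++ l₁)).length := hperm.length_eq ▸ hlen
    have hadj0 : ∀ u ∈ C, ∀ w ∈ C, (G.Adj u w ↔ CConsec (x :: (l₂ ++ l₁)) u w) := by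
      intro u hu w hw
      rw [hadj u (hmemC u hu) w (hmemC w hw), cconsec_rotate]
    cases hr : l₂ ++ l₁ with
    | nil => rw [hr] at hlen0; simp at hlen0
    | cons y ys =>
      rw [hr] at hnd0 hfin0 hlen0 hadj0
      clear hr
      obtain ⟨z, hz⟩ : ∃ z, (y :: ys).getLast? = some z :=
        ⟨(y :: ys).getLast (by simp), List.getLast?_eq_getLast _⟩
      have hxnotr : x ∉ y :: ys := (List.nodup_cons.mp hnd0).1
      have hcc : CConsec (x :: y :: ys) x x' := (hadj0 x hxC x' hx'C).mp hxx'
      rw [cconsec_iff x x' (x :: y :: ys) x z rfl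
        (by rw [List.getLast?_cons_cons]; exact hz), consec_cons_cons] at hcc
      rcases hcc with (⟨-, hx'y⟩ | ⟨hxy, -⟩ | hcons) | ⟨-, hx'x'⟩ | ⟨-, hx'z⟩
      · -- x' = y : use the reversed rotation
        refine ⟨((y :: ys) ++ [x]).reverse, ?_, ?_, ?_, ?_, ?_, ?_⟩
        · exact ((List.reverse_perm _).trans List.perm_append_comm).nodup_iff.mpr hnd0
        · rw [List.toFinset_eq_of_perm _ _ ((List.reverse_perm _).trans List.perm_append_comm)]
          exact hfin0
        · rw [((List.reverse_perm _).trans List.perm_append_comm).length_eq]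
          exact hlen0
        · intro u hu w hw
          rw [cconsec_reverse, cconsec_rotate_one]
          exact hadj0 u hu w hw
        · rw [List.head?_reverse]; exact List.getLast?_concat
        · rw [List.getLast?_reverse, hx'y]; rfl
      · exact absurd (hxy ▸ (List.mem_cons_self : y ∈ y :: ys)) hxnotr
      · exact absurd (consec_mem hcons).1 hxnotr
      · exact absurd hx'x' hx'x
      · exact ⟨x :: y :: ys, hnd0, hfin0, hlen0, hadj0, rfl,
          by rw [List.getLast?_cons_cons, hz, hx'z]⟩
  -- m = (x :: td) ++ [x']
  obtain ⟨t, rfl⟩ : ∃ t, m = x :: t := by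
    cases m with
    | nil => simp at hmhead
    | cons c t =>
      simp only [List.head?_cons, Option.some.injEq] at hmhead
      exact ⟨t, by rw [hmhead]⟩
  cases t with
  | nil => simp at hmlen
  | cons b t2 =>
  obtain ⟨td, hmdeq⟩ : ∃ td, x :: b :: t2 = (x :: td) ++ [x'] := by
    have h1 : (b :: t2).getLast (by simp) = x' := by
      have h2 := List.getLast?_eq_getLast (show x :: b :: t2 ≠ [] by simp)
      rw [hmlast, Option.some.injEq, List.getLast_cons_cons] at h2
      exact h2.symm
    refine ⟨(b :: t2).dropLast, ?_⟩
    rw [List.cons_append]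
    congr 1
    rw [← h1]
    exact (List.dropLast_append_getLast (by simp)).symm
  rw [hmdeq] at hmnd hmfin hmlen hmadj hmlast
  clear hmdeq hmhead
  -- basic facts about md := x :: td
  have hx'md : x' ∉ x :: td := fun h =>
    (List.disjoint_of_nodup_append hmnd) h (List.mem_singleton_self x')
  have hmdnd : (x :: td).Nodup := (List.nodup_append.mp hmnd).1
  have hmdC : ∀ w ∈ x :: td, w ∈ C := fun w h => by
    rw [← hmfin, List.mem_toFinset, List.mem_append]; exact Or.inl h
  have hCmd : ∀ y ∈ C, y = x' ∨ y ∈ x :: td := by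
    intro y hy
    rw [← hmfin, List.mem_toFinset, List.mem_append] at hy
    rcases hy with h | h
    · exact Or.inr h
    · exact Or.inl (List.mem_singleton.mp h)
  have hamd : a ∉ x :: td := fun h => haC (hmdC a h)
  have hvmd : v ∉ x :: td := fun h => hvC (hmdC v h)
  have hax : a ≠ x := fun h => haC (h ▸ hxC)
  have hvx' : v ≠ x := fun h => hvC (h ▸ hxC)
  -- the path list
  set p : List V := a :: v :: x :: td with hp
  have hconsP : ∀ u w : V, Consec p u w ↔
      ((u = a ∧ w = v) ∨ (u = v ∧ w = a)) ∨ ((u = v ∧ w = x) ∨ (u = x ∧ w = v)) ∨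
        Consec (x :: td) u w := by
    intro u w
    rw [hp, consec_cons_cons, consec_cons_cons]
    tauto
  have hmdadj : ∀ u ∈ x :: td, ∀ w ∈ x :: td, (G.Adj u w ↔ Consec (x :: td) u w) := by
    intro u hu w hw
    have hu' : u ≠ x' := fun h => hx'md (h ▸ hu)
    have hw' : w ≠ x' := fun h => hx'md (h ▸ hw)
    obtain ⟨gl, hgl⟩ : ∃ gl, (x :: td).getLast? = some gl :=
      ⟨(x :: td).getLast (by simp), List.getLast?_eq_getLast _⟩
    rw [hmadj u (hmdC u hu) w (hmdC w hw),
      cconsec_iff u w ((x :: td) ++ [x']) x x' rfl hmlast,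
      consec_append_singleton u w x' gl _ hgl]
    constructor
    · rintro ((h | ⟨-, h⟩ | ⟨h, -⟩) | ⟨h, -⟩ | ⟨-, h⟩)
      · exact h
      · exact absurd h hw'
      · exact absurd h hu'
      · exact absurd h hu'
      · exact absurd h hw'
    · exact fun h => Or.inl (Or.inl h)
  have hadjP : ∀ u ∈ p, ∀ w ∈ p, (G.Adj u w ↔ Consec p u w) := by
    intro u hu w hw
    have hmem : ∀ y : V, y ∈ p → y = a ∨ y = v ∨ y ∈ x :: td := by
      intro y hy
      rw [hp] at hy
      simpa using hy
    rw [hconsP]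
    rcases hmem u hu with rfl | rfl | hu' <;> rcases hmem w hw with rfl | rfl | hw'
    · -- a a
      refine iff_of_false (G.irrefl) ?_
      rintro ((⟨-, h⟩ | ⟨h, -⟩) | (⟨h, -⟩ | ⟨h, -⟩) | h)
      · exact hav h
      · exact hav h
      · exact hav h
      · exact hax h
      · exact hamd (consec_mem h).1
    · -- a v
      exact iff_of_true hva.symm (Or.inl (Or.inl ⟨rfl, rfl⟩))
    · -- a, w ∈ md
      refine iff_of_false (fun h => hanone w (hmdC w hw') h) ?_
      rintro ((⟨-, h⟩ | ⟨h, -⟩) | (⟨h, -⟩ | ⟨h, -⟩) | h)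
      · exact hvmd (h ▸ hw')
      · exact hav h
      · exact hav h
      · exact hax h
      · exact hamd (consec_mem h).1
    · -- v a
      exact iff_of_true hva (Or.inl (Or.inr ⟨rfl, rfl⟩))
    · -- v v
      refine iff_of_false (G.irrefl) ?_
      rintro ((⟨h, -⟩ | ⟨-, h⟩) | (⟨-, h⟩ | ⟨h, -⟩) | h)
      · exact hav h.symm
      · exact hav h.symm
      · exact hvx' h
      · exact hvx' h
      · exact hvmd (consec_mem h).1
    · -- v, w ∈ md
      constructor
      · intro h
        have hwx : w = x := by
          by_contra hne
          exact hvonly w (hmdC w hw') hne h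
        exact Or.inr (Or.inl (Or.inl ⟨rfl, hwx⟩))
      · rintro ((⟨h, -⟩ | ⟨-, h⟩) | (⟨-, h⟩ | ⟨h, -⟩) | h)
        · exact absurd h.symm hav
        · exact absurd (h ▸ hw') hamd
        · exact h ▸ hvx
        · exact absurd h hvx'
        · exact absurd (consec_mem h).1 hvmd
    · -- u ∈ md, a
      refine iff_of_false (fun h => hanone u (hmdC u hu') h.symm) ?_
      rintro ((⟨-, h⟩ | ⟨h, -⟩) | (⟨h, -⟩ | ⟨-, h⟩) | h)
      · exact hav h
      · exact hvmd (h ▸ hu')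
      · exact hvmd (h ▸ hu')
      · exact hav h
      · exact hamd (consec_mem h).2
    · -- u ∈ md, v
      constructor
      · intro h
        have hux : u = x := by
          by_contra hne
          exact hvonly u (hmdC u hu') hne h.symm
        exact Or.inr (Or.inl (Or.inr ⟨hux, rfl⟩))
      · rintro ((⟨h, -⟩ | ⟨h, -⟩) | (⟨h, -⟩ | ⟨h, -⟩) | h)
        · exact absurd (h ▸ hu') hamd
        · exact absurd (h ▸ hu') hvmd
        · exact absurd (h ▸ hu') hvmd
        · exact h ▸ hvx.symm
        · exact absurd (consec_mem h).2 hvmd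
    · -- both in md
      rw [hmdadj u hu' w hw']
      constructor
      · exact fun h => Or.inr (Or.inr h)
      · rintro ((⟨h, -⟩ | ⟨h, -⟩) | (⟨h, -⟩ | ⟨-, h⟩) | h)
        · exact absurd (h ▸ hu') hamd
        · exact absurd (h ▸ hu') hvmd
        · exact absurd (h ▸ hu') hvmd
        · exact absurd (h ▸ hw') hvmd
        · exact h
  have hpnd : p.Nodup := by
    rw [hp, List.nodup_cons, List.nodup_cons]
    refine ⟨?_, hvmd, hmdnd⟩
    intro h
    rcases List.mem_cons.mp h with h | h
    · exact hav h
    · exact hamd h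
  have hpfin : p.toFinset = (C \ {x'}) ∪ {v, a} := by
    ext y
    have hmd_iff : y ∈ x :: td ↔ y ∈ C ∧ y ≠ x' := by
      constructor
      · exact fun h => ⟨hmdC y h, fun he => hx'md (he ▸ h)⟩
      · rintro ⟨hyC, hyne⟩
        rcases hCmd y hyC with h | h
        · exact absurd h hyne
        · exact h
    rw [hp]
    simp only [List.toFinset_cons, Finset.mem_insert, List.mem_toFinset, Finset.mem_union,
      Finset.mem_sdiff, Finset.mem_singleton]
    rw [← List.mem_cons, hmd_iff]
    constructor
    · rintro (h | h | ⟨h1, h2⟩)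
      · exact Or.inr (Or.inr h)
      · exact Or.inr (Or.inl h)
      · exact Or.inl ⟨h1, h2⟩
    · rintro (⟨h1, h2⟩ | h | h)
      · exact Or.inr (Or.inr ⟨h1, h2⟩)
      · exact Or.inr (Or.inl h)
      · exact Or.inl h
  have hClen : C.card = td.length + 2 := by
    rw [← hmfin, List.toFinset_card_of_nodup hmnd]
    simp
  have hpcard : p.toFinset.card = C.card + 1 := by
    rw [List.toFinset_card_of_nodup hpnd, hp, hClen]
    simp
  have hpath : IsInducedPath G ((C \ {x'}) ∪ {v, a}) :=
    ⟨p, ⟨by rw [hp]; simp, hpnd, hadjP⟩, hpfin⟩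
  have hcard : ((C \ {x'}) ∪ {v, a}).card = C.card + 1 := by
    rw [← hpfin]; exact hpcard
  refine ⟨hpath, hcard, ?_⟩
  rintro ⟨-, hsp⟩
  refine hsp x' hx'C ⟨(C \ {x'}) ∪ {v, a}, Or.inr hpath, le_of_eq hcard.symm, ?_⟩
  rw [Finset.erase_eq]
  exact Finset.subset_union_left
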